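/- arXiv:1712.01270 — 2 statements merged into one kernel-verified Lean document; each statement's English description precedes it below -/
import Mathlib

section
/- Let b, x be real with b ≠ 0, and let S = diag(1, √|b|). Then S·J(x,y)·S⁻¹ = [[−2x, b/√|b|],[√|b|, 0]], where J(x,y) = [[−2x, b],[1, 0]], and the singular values of S·J(x,y)·S⁻¹ are σ₁((x,y),S) = √(x² + |b|) + |x| and σ₂((x,y),S) = √(x² + |b|) − |x| = |b|/σ₁((x,y),S). -/
/-!
Conjugating by `S = diag(1, √|b|)` only rescales the off-diagonal entries of `J`, so
`M = S J S⁻¹` has entries `-2x, b/√|b|, √|b|, 0`. Hence `MᵀM` has trace `4x² + 2|b|` (the sum of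
the squared entries) and determinant `(det M)² = b²`. Since `σ₁σ₂ = |b|` and
`σ₁² + σ₂² = 4x² + 2|b|`, the characteristic polynomial of `MᵀM` factors as `(μ - σ₁²)(μ - σ₂²)`.
-/

open Matrix

/-- `μ` is an eigenvalue of the real 2×2 matrix `A`. -/
def IsEigenvalue2 (A : Matrix (Fin 2) (Fin 2) ℝ) (μ : ℝ) : Prop :=
  ∃ v : Fin 2 → ℝ, v ≠ 0 ∧ Matrix.mulVec A v = μ • v

theorem isEigenvalue2_iff_det_sub_smul_one_eq_zero (A : Matrix (Fin 2) (Fin 2) ℝ) (μ : ℝ) :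
    IsEigenvalue2 A μ ↔ (A - μ • (1 : Matrix (Fin 2) (Fin 2) ℝ)).det = 0 := by
  rw [← exists_mulVec_eq_zero_iff]
  simp only [IsEigenvalue2, sub_mulVec, smul_mulVec, one_mulVec, sub_eq_zero]

theorem det_sub_smul_one_fin_two {R : Type*} [CommRing R] (A : Matrix (Fin 2) (Fin 2) R) (μ : R) :
    (A - μ • (1 : Matrix (Fin 2) (Fin 2) R)).det = μ ^ 2 - A.trace * μ + A.det := by
  simp [det_fin_two, trace_fin_two]
  ring

theorem isEigenvalue2_iff_of_trace_of_det (A : Matrix (Fin 2) (Fin 2) ℝ) {p q : ℝ}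
    (htrace : A.trace = p + q) (hdet : A.det = p * q) (μ : ℝ) :
    IsEigenvalue2 A μ ↔ μ = p ∨ μ = q := by
  have hfactor : μ ^ 2 - A.trace * μ + A.det = (μ - p) * (μ - q) := by
    rw [htrace, hdet]; ring
  rw [isEigenvalue2_iff_det_sub_smul_one_eq_zero, det_sub_smul_one_fin_two, hfactor,
    mul_eq_zero, sub_eq_zero, sub_eq_zero]

theorem inv_diag_one_fin_two {K : Type*} [Field K] {s : K} (hs : s ≠ 0) :
    (!![1, 0; 0, s])⁻¹ = !![1, 0; 0, s⁻¹] := by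
  apply inv_eq_right_inv
  simp [one_fin_two, hs]

theorem diag_one_mul_mul_inv_fin_two {K : Type*} [Field K] {s : K} (hs : s ≠ 0) (a b c d : K) :
    !![1, 0; 0, s] * !![a, b; c, d] * (!![1, 0; 0, s])⁻¹ = !![a, b / s; s * c, d] := by
  rw [inv_diag_one_fin_two hs]
  simp [div_eq_mul_inv]
  field_simp

theorem abs_lt_sqrt_sq_add {x c : ℝ} (hc : 0 < c) : |x| < Real.sqrt (x ^ 2 + c) := by
  rw [← Real.sqrt_sq_eq_abs]
  exact Real.sqrt_lt_sqrt (sq_nonneg x) (lt_add_of_pos_right _ hc)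

theorem sqrt_sq_add_add_abs_mul_sub_abs (x : ℝ) {c : ℝ} (hc : 0 ≤ c) :
    (Real.sqrt (x ^ 2 + c) + |x|) * (Real.sqrt (x ^ 2 + c) - |x|) = c := by
  have hsq : Real.sqrt (x ^ 2 + c) ^ 2 = x ^ 2 + c := Real.sq_sqrt (by positivity)
  linear_combination hsq - sq_abs x

theorem sq_sqrt_sq_add_add_abs_add_sq_sub_abs (x : ℝ) {c : ℝ} (hc : 0 ≤ c) :
    (Real.sqrt (x ^ 2 + c) + |x|) ^ 2 + (Real.sqrt (x ^ 2 + c) - |x|) ^ 2 = 4 * x ^ 2 + 2 * c := by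
  have hsq : Real.sqrt (x ^ 2 + c) ^ 2 = x ^ 2 + c := Real.sq_sqrt (by positivity)
  linear_combination 2 * hsq + 2 * sq_abs x

theorem trace_transpose_mul_self_fin_two {R : Type*} [CommRing R] (a b c d : R) :
    (!![a, b; c, d]ᵀ * !![a, b; c, d]).trace = a ^ 2 + b ^ 2 + c ^ 2 + d ^ 2 := by
  simp [trace_fin_two, mul_apply, Fin.sum_univ_two]
  ring

theorem henon_jacobian_conjugated_singular_values (b x : ℝ) (hb : b ≠ 0)
    (S J M : Matrix (Fin 2) (Fin 2) ℝ)
    (hS : S = !![1, 0; 0, Real.sqrt |b|])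
    (hJ : J = !![-2 * x, b; 1, 0])
    (hM : M = S * J * S⁻¹)
    (σ₁ σ₂ : ℝ)
    (hσ₁ : σ₁ = Real.sqrt (x ^ 2 + |b|) + |x|)
    (hσ₂ : σ₂ = Real.sqrt (x ^ 2 + |b|) - |x|) :
    M = !![-2 * x, b / Real.sqrt |b|; Real.sqrt |b|, 0] ∧
    σ₂ = |b| / σ₁ ∧ σ₁ ≥ σ₂ ∧ σ₂ > 0 ∧
    (∀ μ : ℝ, IsEigenvalue2 (Mᵀ * M) μ ↔ μ = σ₁ ^ 2 ∨ μ = σ₂ ^ 2) := by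
  have hb_pos : 0 < |b| := abs_pos.mpr hb
  have hs_pos : 0 < Real.sqrt |b| := Real.sqrt_pos.mpr hb_pos
  have hs_sq : Real.sqrt |b| ^ 2 = |b| := Real.sq_sqrt hb_pos.le
  have hMform : M = !![-2 * x, b / Real.sqrt |b|; Real.sqrt |b|, 0] := by
    rw [hM, hS, hJ, diag_one_mul_mul_inv_fin_two hs_pos.ne', mul_one]
  have hσ₂_pos : σ₂ > 0 := hσ₂ ▸ sub_pos.mpr (abs_lt_sqrt_sq_add hb_pos)
  have hprod : σ₁ * σ₂ = |b| := hσ₁ ▸ hσ₂ ▸ sqrt_sq_add_add_abs_mul_sub_abs x hb_pos.le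
  have hσ₂_le : σ₂ ≤ σ₁ := by
    rw [hσ₁, hσ₂]
    linarith [abs_nonneg x]
  have hσ₁_pos : σ₁ > 0 := hσ₂_pos.trans_le hσ₂_le
  refine ⟨hMform, by rw [← hprod, mul_div_cancel_left₀ _ hσ₁_pos.ne'], hσ₂_le, hσ₂_pos, ?_⟩
  refine isEigenvalue2_iff_of_trace_of_det _ ?_ ?_
  · have hsum := sq_sqrt_sq_add_add_abs_add_sq_sub_abs x (abs_nonneg b)
    rw [hMform, trace_transpose_mul_self_fin_two, hσ₁, hσ₂, hsum, div_pow, hs_sq,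
      ← sq_abs b, sq |b|, mul_self_div_self]
    ring
  · rw [det_mul, det_transpose, hMform, det_fin_two_of, ← mul_pow, hprod,
      div_mul_cancel₀ _ hs_pos.ne', sq_abs]
    ring
end

section
/- Let a, b be real with 0 < |b| < 1 and a > −(b−1)²/4. Set x₋ = ((b−1) − √((b−1)² + 4a))/2 and γ = 1/((b − 1 − 2x₋)·√(x₋² + |b|)). Then for every real x: ln(√(x² + |b|) + |x|) + γ·(a + (b−1)x − x²) ≤ ln(√(x₋² + |b|) + |x₋|). -/
/-! The function `t ↦ log (√(t ^ 2 + β) + t)` is a rescaled `arsinh`: its derivative is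
`1 / √(t ^ 2 + β)`, so it is concave on `t ≥ 0` and lies below its tangent line at `|xm|`.
The quadratic `a + (b - 1) x - x ^ 2` only grows when `x` is replaced by `-|x|` (as `b < 1`),
and lies below its tangent line at its root `xm`. The constant `γ` is chosen precisely so that
the slopes of the two tangent lines cancel. -/

open Real Set

theorem ConcaveOn.le_add_mul_sub_of_hasDerivAt {S : Set ℝ} {f : ℝ → ℝ} {x y f' : ℝ}
    (hf : ConcaveOn ℝ S f) (hx : x ∈ S) (hy : y ∈ S) (hf' : HasDerivAt f f' x) :
    f y ≤ f x + f' * (y - x) := by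
  rcases lt_trichotomy x y with hxy | rfl | hyx
  · have h := hf.slope_le_of_hasDerivAt hx hy hxy hf'
    rw [slope_def_field, div_le_iff₀ (sub_pos.2 hxy)] at h
    linarith
  · simp
  · have h := hf.le_slope_of_hasDerivAt hy hx hyx hf'
    rw [slope_def_field, le_div_iff₀ (sub_pos.2 hyx)] at h
    linarith

namespace Real

theorem sqrt_sq_add_add_pos {β : ℝ} (hβ : 0 < β) (t : ℝ) : 0 < √(t ^ 2 + β) + t := by
  have h : |t| < √(t ^ 2 + β) := by
    rw [← sqrt_sq_eq_abs]; exact sqrt_lt_sqrt (sq_nonneg t) (by linarith)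
  linarith [neg_abs_le t]

theorem hasDerivAt_log_sqrt_sq_add_add {β : ℝ} (hβ : 0 < β) (t : ℝ) :
    HasDerivAt (fun t => log (√(t ^ 2 + β) + t)) (√(t ^ 2 + β))⁻¹ t := by
  have hsum : HasDerivAt (fun y => √(y ^ 2 + β) + y) (t / √(t ^ 2 + β) + 1) t := by
    refine ((((hasDerivAt_pow 2 t).add_const β).sqrt (by positivity)).fun_add
      (hasDerivAt_id' t)).congr_deriv ?_
    field_simp
    ring
  convert hsum.log (sqrt_sq_add_add_pos hβ t).ne' using 1
  field_simp
  rw [add_comm, div_self (sqrt_sq_add_add_pos hβ t).ne']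

theorem concaveOn_log_sqrt_sq_add_add {β : ℝ} (hβ : 0 < β) :
    ConcaveOn ℝ (Ici 0) (fun t => log (√(t ^ 2 + β) + t)) := by
  have hd (t : ℝ) := hasDerivAt_log_sqrt_sq_add_add hβ t
  refine AntitoneOn.concaveOn_of_deriv (convex_Ici 0)
    (fun t _ => (hd t).continuousAt.continuousWithinAt)
    (fun t _ => (hd t).differentiableAt.differentiableWithinAt) ?_
  intro s hs t _ hst
  rw [interior_Ici] at hs
  rw [(hd s).deriv, (hd t).deriv]
  have : 0 < √(s ^ 2 + β) := sqrt_pos.2 (by positivity)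
  gcongr
  exact hs.le

end Real

theorem henon_lyapunov_function_estimate (a b : ℝ)
    (hb0 : 0 < |b|) (hb1 : |b| < 1) (ha : a > -(b - 1) ^ 2 / 4)
    (xm γ : ℝ)
    (hxm : xm = ((b - 1) - Real.sqrt ((b - 1) ^ 2 + 4 * a)) / 2)
    (hγ : γ = 1 / ((b - 1 - 2 * xm) * Real.sqrt (xm ^ 2 + |b|))) :
    ∀ x : ℝ,
      Real.log (Real.sqrt (x ^ 2 + |b|) + |x|) + γ * (a + (b - 1) * x - x ^ 2)
        ≤ Real.log (Real.sqrt (xm ^ 2 + |b|) + |xm|) := by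
  intro x
  have hb : b < 1 := lt_of_abs_lt hb1
  have hdisc : 0 < (b - 1) ^ 2 + 4 * a := by linarith
  have hslope : b - 1 - 2 * xm = √((b - 1) ^ 2 + 4 * a) := by rw [hxm]; ring
  have hslope_pos : 0 < b - 1 - 2 * xm := hslope ▸ sqrt_pos.2 hdisc
  have hroot : a + (b - 1) * xm - xm ^ 2 = 0 := by
    nlinarith [sq_sqrt hdisc.le]
  have hxm_neg : xm < 0 := by nlinarith
  set sm := √(xm ^ 2 + |b|)
  have hsm : 0 < sm := sqrt_pos.2 (by positivity)
  have hlog : log (√(x ^ 2 + |b|) + |x|) ≤ log (sm + |xm|) + (|x| - |xm|) / sm := by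
    have h := (concaveOn_log_sqrt_sq_add_add hb0).le_add_mul_sub_of_hasDerivAt
      (abs_nonneg xm) (abs_nonneg x) (hasDerivAt_log_sqrt_sq_add_add hb0 |xm|)
    simp only [sq_abs] at h
    rwa [← div_eq_inv_mul] at h
  have hquad : a + (b - 1) * x - x ^ 2 ≤ (b - 1 - 2 * xm) * (-|x| - xm) := by
    have hx : (b - 1) * x ≤ (1 - b) * |x| := by
      nlinarith [neg_abs_le x, le_abs_self x]
    nlinarith [sq_nonneg (|x| + xm), sq_abs x]
  have hγq : γ * (a + (b - 1) * x - x ^ 2) ≤ -((|x| - |xm|) / sm) := by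
    calc γ * (a + (b - 1) * x - x ^ 2) ≤ γ * ((b - 1 - 2 * xm) * (-|x| - xm)) := by
          gcongr
          rw [hγ]; positivity
      _ = -((|x| - |xm|) / sm) := by
          rw [hγ, abs_of_neg hxm_neg]; field_simp; ring
  linarith
end
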